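/- Let b ≥ 1, let T be a tree on n₁ vertices with leaf set S, and let T' be obtained from T by attaching ⌊n₁^β + b⌋ new pendant leaves to each leaf of T (for some real β ≥ 1). If a budget-b firefighting strategy on T (fire starting at a fixed vertex s) saves all leaves of T, then the same strategy applied to T' (fire starting at s) burns at most n₁ vertices of T'. Conversely, if every budget-b strategy on T burns at least one leaf of T, then every budget-b strategy on T' burns at least ⌊n₁^β⌋ vertices of T'. -/

import Mathlib

/-- `burnedSet G s φ t` is the set of vertices of `G` burned at time `t` in the firefighting
process where `s` is burned at time `0` and `φ t'` is the set of vertices protected at time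
step `t'`: at each step the fire spreads from every burned vertex to each of its neighbors
that has not been protected at any time step so far. -/
def burnedSet {V : Type} (G : SimpleGraph V) (s : V) (φ : ℕ → Finset V) : ℕ → Set V
  | 0 => {s}
  | t + 1 => burnedSet G s φ t ∪
      {w | (∃ v ∈ burnedSet G s φ t, G.Adj v w) ∧ ∀ t' ≤ t + 1, w ∉ φ t'}

/-- A strategy is valid with respect to budget `b` if no vertex is protected at time `0`,
at most `b` vertices are protected at each time step, and a vertex protected at time `t+1`
is not burned at time `t`. -/
def validStrategy {V : Type} (G : SimpleGraph V) (s : V) (b : ℕ) (φ : ℕ → Finset V) : Prop :=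
  φ 0 = ∅ ∧ (∀ t, (φ t).card ≤ b) ∧ ∀ t v, v ∈ φ (t + 1) → v ∉ burnedSet G s φ t

/-- A vertex is saved if it is never burned. -/
def savedBy {V : Type} (G : SimpleGraph V) (s : V) (φ : ℕ → Finset V) (v : V) : Prop :=
  ∀ t, v ∉ burnedSet G s φ t

/-- `attachPendants G P m` is the graph obtained from `G` by attaching `m` new pendant
leaves to every vertex satisfying `P`. -/
def attachPendants {V : Type} (G : SimpleGraph V) (P : V → Prop) (m : ℕ) :
    SimpleGraph (V ⊕ ({v : V // P v} × Fin m)) :=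
  SimpleGraph.fromRel (fun x y =>
    match x, y with
    | Sum.inl a, Sum.inl c => G.Adj a c
    | Sum.inl a, Sum.inr p => a = p.1.1
    | _, _ => False)

/-! If `φ` saves every leaf of `T`, the fire on `T'` never reaches a pendant vertex, so it burns
exactly what it burns on `T`. Conversely, a strategy `ψ` on `T'` is read on `T` by letting a
protected pendant stand for its leaf (`pullbackStrategy`). This is a valid strategy on `T`, so it
burns some leaf `ℓ`. Until `ℓ` burns in `T'` none of its pendants is protected, for otherwise `ℓ`
would be protected on `T` and hence saved; so at the next step at most `b` of its
`⌊n₁^β⌋ + b` pendants can be protected, and the others burn. -/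

section Firefighting

variable {V : Type} (G : SimpleGraph V) (s : V) (φ : ℕ → Finset V)

lemma start_mem_burnedSet : ∀ t, s ∈ burnedSet G s φ t
  | 0 => rfl
  | t + 1 => Or.inl (start_mem_burnedSet t)

lemma burnedSet_monotone : Monotone (burnedSet G s φ) :=
  monotone_nat_of_le_succ fun _ => Set.subset_union_left

variable {G s φ}

lemma mem_burnedSet_of_mem_strategy_succ {v : V} {t t' : ℕ}
    (hv : v ∈ burnedSet G s φ t) (hprot : v ∈ φ (t' + 1)) : v ∈ burnedSet G s φ t' := by
  induction t with
  | zero =>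
    rw [Set.mem_singleton_iff.mp hv]
    exact start_mem_burnedSet G s φ t'
  | succ t ih =>
    rcases hv with hv | ⟨hspread, hfree⟩
    · exact ih hv
    · have htt' : t + 1 ≤ t' := by
        by_contra! h
        exact hfree (t' + 1) (by omega) hprot
      exact burnedSet_monotone G s φ htt' (Or.inr ⟨hspread, hfree⟩)

lemma validStrategy.savedBy_of_mem {b : ℕ} (hφ : validStrategy G s b φ) {v : V} :
    ∀ {t}, v ∈ φ t → savedBy G s φ v
  | 0, hv => by simp [hφ.1] at hv
  | t + 1, hv => fun _ hburn =>
      hφ.2.2 t v hv (mem_burnedSet_of_mem_strategy_succ hburn hv)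

end Firefighting

section Pullback

variable {V W : Type} {G : SimpleGraph V} {H : SimpleGraph W}

/-- A strategy `ψ` on `H` read on `G` through a retraction `g` of `f`: protecting any vertex of
the fibre `g ⁻¹' {v}` counts as protecting `v`, unless `f v` is already burned in `H`. -/
noncomputable def pullbackStrategy (H : SimpleGraph W) (s : W) (ψ : ℕ → Finset W) (f : V → W)
    (g : W → V) : ℕ → Finset V :=
  open scoped Classical in
  fun t => ((ψ t).image g).filter fun v => ∀ t' < t, f v ∉ burnedSet H s ψ t'

variable (f : G →g H) {g : W → V} (hgf : Function.LeftInverse g f) (s : V) (ψ : ℕ → Finset W)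
include hgf

lemma burnedSet_pullbackStrategy_subset :
    ∀ t, burnedSet G s (pullbackStrategy H (f s) ψ f g) t ⊆ f ⁻¹' burnedSet H (f s) ψ t
  | 0, v, hv => by rw [Set.mem_singleton_iff.mp hv]; rfl
  | t + 1, v, hv => by
    classical
    rcases hv with hv | ⟨⟨u, hu, huv⟩, hfree⟩
    · exact Or.inl (burnedSet_pullbackStrategy_subset t hv)
    · by_cases hburnt : f v ∈ burnedSet H (f s) ψ t
      · exact Or.inl hburnt
      refine Or.inr ⟨⟨f u, burnedSet_pullbackStrategy_subset t hu, f.map_adj huv⟩,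
        fun t' ht' hprot => hfree t' ht' (Finset.mem_filter.mpr
          ⟨Finset.mem_image.mpr ⟨f v, hprot, hgf v⟩, fun t'' ht'' hburnt'' => ?_⟩)⟩
      exact hburnt (burnedSet_monotone H (f s) ψ (by omega) hburnt'')

lemma validStrategy_pullbackStrategy {b : ℕ} (hψ : validStrategy H (f s) b ψ) :
    validStrategy G s b (pullbackStrategy H (f s) ψ f g) := by
  classical
  obtain ⟨hψ0, hψb, -⟩ := hψ
  refine ⟨by simp [pullbackStrategy, hψ0], fun t => ?_, fun t v hv hburnt => ?_⟩
  · exact (Finset.card_filter_le _ _).trans (Finset.card_image_le.trans (hψb t))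
  · exact (Finset.mem_filter.mp hv).2 t t.lt_succ_self
      (burnedSet_pullbackStrategy_subset f hgf s ψ t hburnt)

end Pullback

namespace attachPendants

variable {V : Type} {G : SimpleGraph V} {P : V → Prop} {m : ℕ}

lemma adj_inl_inl {u v : V} :
    (attachPendants G P m).Adj (Sum.inl u) (Sum.inl v) ↔ G.Adj u v := by
  simp only [attachPendants, SimpleGraph.fromRel_adj, ne_eq, Sum.inl.injEq]
  exact ⟨fun ⟨_, h⟩ => h.elim id .symm, fun h => ⟨h.ne, Or.inl h⟩⟩

lemma adj_inl_inr {u : V} {p : {v // P v} × Fin m} :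
    (attachPendants G P m).Adj (Sum.inl u) (Sum.inr p) ↔ u = p.1.1 := by
  simp only [attachPendants, SimpleGraph.fromRel_adj, ne_eq, reduceCtorEq, not_false_eq_true,
    true_and, or_false]

variable (G P m)

def inlHom : G →g attachPendants G P m where
  toFun := Sum.inl
  map_rel' := adj_inl_inl.mpr

def base : V ⊕ ({v // P v} × Fin m) → V :=
  Sum.elim id fun p => p.1.1

lemma base_leftInverse_inlHom : Function.LeftInverse (base P m) (inlHom G P m) :=
  fun _ => rfl

variable {G P m}

lemma burnedSet_image_inl_subset {s : V} {φ : ℕ → Finset V} [DecidableEq V]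
    (hsave : ∀ v, P v → savedBy G s φ v) :
    ∀ t, burnedSet (attachPendants G P m) (Sum.inl s) (fun t => (φ t).image Sum.inl) t ⊆
      Sum.inl '' burnedSet G s φ t
  | 0 => by simp [burnedSet]
  | t + 1 => by
    rintro x (hx | ⟨⟨y, hy, hyx⟩, hfree⟩)
    · exact Set.image_mono Set.subset_union_left (burnedSet_image_inl_subset hsave t hx)
    obtain ⟨u, hu, rfl⟩ := burnedSet_image_inl_subset hsave t hy
    cases x with
    | inl v =>
      exact ⟨v, Or.inr ⟨⟨u, hu, adj_inl_inl.mp hyx⟩,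
        fun t' ht' hv => hfree t' ht' (Finset.mem_image_of_mem _ hv)⟩, rfl⟩
    | inr p => exact (hsave _ p.1.2 t (adj_inl_inr.mp hyx ▸ hu)).elim

lemma ncard_burnedSet_image_inl_le [Fintype V] [DecidableEq V] {s : V} {φ : ℕ → Finset V}
    (hsave : ∀ v, P v → savedBy G s φ v) :
    {w | ∃ t, w ∈ burnedSet (attachPendants G P m) (Sum.inl s)
      (fun t => (φ t).image Sum.inl) t}.ncard ≤ Fintype.card V := by
  have hsub : {w | ∃ t, w ∈ burnedSet (attachPendants G P m) (Sum.inl s)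
      (fun t => (φ t).image Sum.inl) t} ⊆ Set.range Sum.inl := by
    rintro w ⟨t, hw⟩
    obtain ⟨v, -, rfl⟩ := burnedSet_image_inl_subset hsave t hw
    exact Set.mem_range_self v
  calc _ ≤ (Set.range (Sum.inl : V → V ⊕ ({v // P v} × Fin m))).ncard :=
        Set.ncard_le_ncard hsub (Set.toFinite _)
    _ = Fintype.card V := by
        rw [Set.ncard_range_of_injective Sum.inl_injective, Nat.card_eq_fintype_card]

lemma sub_le_ncard_burnedSet_of_pendants_unprotected [Finite V] {s : V} {b τ : ℕ}
    {ψ : ℕ → Finset (V ⊕ ({v // P v} × Fin m))} (hψ : ∀ t, (ψ t).card ≤ b) {v : {v // P v}}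
    (hv : Sum.inl v.1 ∈ burnedSet (attachPendants G P m) (Sum.inl s) ψ τ)
    (hfree : ∀ t ≤ τ, ∀ i, Sum.inr (v, i) ∉ ψ t) :
    m - b ≤ {w | ∃ t, w ∈ burnedSet (attachPendants G P m) (Sum.inl s) ψ t}.ncard := by
  classical
  set pendant : Fin m → V ⊕ ({v // P v} × Fin m) := fun i => Sum.inr (v, i)
  have hinj : Function.Injective pendant := fun i j h => by simpa [pendant] using h
  set saved := Finset.univ.filter fun i => pendant i ∈ ψ (τ + 1)
  have hsaved : saved.card ≤ b :=
    (Finset.card_le_card_of_injOn pendant (fun i hi => (Finset.mem_filter.mp hi).2)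
      hinj.injOn).trans (hψ (τ + 1))
  have hburnt : pendant '' ↑savedᶜ ⊆
      {w | ∃ t, w ∈ burnedSet (attachPendants G P m) (Sum.inl s) ψ t} := by
    rintro _ ⟨i, hi, rfl⟩
    refine ⟨τ + 1, Or.inr ⟨⟨_, hv, adj_inl_inr.mpr rfl⟩, fun t ht hprot => ?_⟩⟩
    rcases ht.lt_or_eq with ht | rfl
    · exact hfree t (by omega) i hprot
    · exact Finset.mem_compl.mp hi (Finset.mem_filter.mpr ⟨Finset.mem_univ i, hprot⟩)
  calc m - b ≤ savedᶜ.card := by rw [Finset.card_compl, Fintype.card_fin]; omega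
    _ = (pendant '' ↑savedᶜ).ncard := by
        rw [Set.ncard_image_of_injective _ hinj, Set.ncard_coe_finset]
    _ ≤ _ := Set.ncard_le_ncard hburnt (Set.toFinite _)

lemma sub_le_ncard_burnedSet [Finite V] {s : V} {b : ℕ}
    (hburns : ∀ φ, validStrategy G s b φ → ∃ v t, P v ∧ v ∈ burnedSet G s φ t)
    {ψ : ℕ → Finset (V ⊕ ({v // P v} × Fin m))}
    (hψ : validStrategy (attachPendants G P m) (Sum.inl s) b ψ) :
    m - b ≤ {w | ∃ t, w ∈ burnedSet (attachPendants G P m) (Sum.inl s) ψ t}.ncard := by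
  have hφ := validStrategy_pullbackStrategy (inlHom G P m) (base_leftInverse_inlHom G P m) s ψ hψ
  obtain ⟨v, t₀, hPv, hv⟩ := hburns _ hφ
  have hex : ∃ τ, Sum.inl v ∈ burnedSet (attachPendants G P m) (Sum.inl s) ψ τ :=
    ⟨t₀, burnedSet_pullbackStrategy_subset _ (base_leftInverse_inlHom G P m) s ψ t₀ hv⟩
  classical
  refine sub_le_ncard_burnedSet_of_pendants_unprotected (v := ⟨v, hPv⟩) hψ.2.1
    (Nat.find_spec hex) fun t ht i hprot => ?_
  have hvprot : v ∈ pullbackStrategy _ _ ψ (inlHom G P m) (base P m) t :=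
    Finset.mem_filter.mpr ⟨Finset.mem_image.mpr ⟨_, hprot, rfl⟩,
      fun t' ht' => Nat.find_min hex (by omega)⟩
  exact hφ.savedBy_of_mem hvprot t₀ hv

end attachPendants


theorem stmt11_general {V : Type} [Fintype V] [DecidableEq V] (G : SimpleGraph V) [DecidableRel G.Adj]
    (s : V) (b : ℕ) (β : ℝ)
    (n₁ m : ℕ) (hn₁ : n₁ = Fintype.card V) (hm : m = ⌊(n₁ : ℝ) ^ β + (b : ℝ)⌋₊) :
    (∀ φ : ℕ → Finset V, validStrategy G s b φ →
        (∀ v, G.degree v = 1 → v ≠ s → savedBy G s φ v) →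
        Set.ncard {w | ∃ t, w ∈ burnedSet
            (attachPendants G (fun v => G.degree v = 1 ∧ v ≠ s) m) (Sum.inl s)
            (fun t => (φ t).image Sum.inl) t} ≤ n₁) ∧
    ((∀ φ : ℕ → Finset V, validStrategy G s b φ →
          ∃ v t, G.degree v = 1 ∧ v ≠ s ∧ v ∈ burnedSet G s φ t) →
      ∀ ψ, validStrategy (attachPendants G (fun v => G.degree v = 1 ∧ v ≠ s) m)
          (Sum.inl s) b ψ →
        ⌊(n₁ : ℝ) ^ β⌋₊ ≤ Set.ncard {w | ∃ t, w ∈ burnedSet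
            (attachPendants G (fun v => G.degree v = 1 ∧ v ≠ s) m) (Sum.inl s) ψ t}) := by
  refine ⟨fun φ _ hsave => hn₁ ▸ attachPendants.ncard_burnedSet_image_inl_le
    fun v hv => hsave v hv.1 hv.2, fun hburns ψ hψ => ?_⟩
  have hm' : m - b = ⌊(n₁ : ℝ) ^ β⌋₊ := by
    rw [hm, Nat.floor_add_natCast (by positivity), Nat.add_sub_cancel]
  refine hm' ▸ attachPendants.sub_le_ncard_burnedSet (fun φ hφ => ?_) hψ
  obtain ⟨v, t, hdeg, hvs, hv⟩ := hburns φ hφ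
  exact ⟨v, t, ⟨hdeg, hvs⟩, hv⟩

/-- Let `b ≥ 1`, let `T` be a tree on `n₁` vertices with fire starting at `s` and with leaf
set `S` (the vertices of degree `1` other than `s`), and let `T'` be obtained from `T` by
attaching `m = ⌊n₁^β + b⌋` new pendant leaves to each leaf of `T`, for some real `β ≥ 1`.
Then: (1) if a valid budget-`b` strategy on `T` saves all leaves of `T`, the same strategy
applied to `T'` burns at most `n₁` vertices of `T'`; and (2) if every valid budget-`b`
strategy on `T` burns at least one leaf of `T`, then every valid budget-`b` strategy on
`T'` burns at least `⌊n₁^β⌋` vertices of `T'`. -/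
theorem stmt11 {V : Type} [Fintype V] [DecidableEq V] (G : SimpleGraph V) [DecidableRel G.Adj]
    (hG : G.IsTree) (s : V) (b : ℕ) (hb : 1 ≤ b) (β : ℝ) (hβ : 1 ≤ β)
    (n₁ m : ℕ) (hn₁ : n₁ = Fintype.card V) (hm : m = ⌊(n₁ : ℝ) ^ β + (b : ℝ)⌋₊) :
    (∀ φ : ℕ → Finset V, validStrategy G s b φ →
        (∀ v, G.degree v = 1 → v ≠ s → savedBy G s φ v) →
        Set.ncard {w | ∃ t, w ∈ burnedSet
            (attachPendants G (fun v => G.degree v = 1 ∧ v ≠ s) m) (Sum.inl s)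
            (fun t => (φ t).image Sum.inl) t} ≤ n₁) ∧
    ((∀ φ : ℕ → Finset V, validStrategy G s b φ →
          ∃ v t, G.degree v = 1 ∧ v ≠ s ∧ v ∈ burnedSet G s φ t) →
      ∀ ψ, validStrategy (attachPendants G (fun v => G.degree v = 1 ∧ v ≠ s) m)
          (Sum.inl s) b ψ →
        ⌊(n₁ : ℝ) ^ β⌋₊ ≤ Set.ncard {w | ∃ t, w ∈ burnedSet
            (attachPendants G (fun v => G.degree v = 1 ∧ v ≠ s) m) (Sum.inl s) ψ t}) :=
  stmt11_general G s b β n₁ m hn₁ hm
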